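/- Let p be a prime and G a finite group with a component L such that the order of Z(L) is coprime to p. Set H = L·C_G(L), F = {E ∈ A_p(G) : E ∩ H = 1}, and F_1 = {B ∈ Outposet_G(L) : O_p(C_G(LB)) ≠ 1}. Define a relation ⊑ on the disjoint union A_p(H) ∪ F as follows: within A_p(H) and within F, ⊑ is proper inclusion; for F ∈ F and A ∈ A_p(H), F ⊑ A iff C_A(F) ≠ 1 and, in case F ∈ F_1, additionally C_A(F) is not contained in L; and A ⊑ F never holds. Then ⊑ is a strict partial order. -/

import Mathlib

attribute [local instance] Classical.propDecidable

noncomputable section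

namespace QF

/-! ## Group-theoretic notions -/

/-- `H` is a normal subgroup of `K` (as subgroups of an ambient group `G`). -/
def NormalIn {G : Type*} [Group G] (H K : Subgroup G) : Prop :=
  H ≤ K ∧ ∀ k ∈ K, ∀ h ∈ H, k * h * k⁻¹ ∈ H

/-- `L` is a subnormal subgroup of `G`: there is a finite chain of subgroups from `L` to `G`,
each normal in the next. -/
def IsSubnormal {G : Type*} [Group G] (L : Subgroup G) : Prop :=
  ∃ (n : ℕ) (c : ℕ → Subgroup G), c 0 = L ∧ c n = ⊤ ∧ ∀ i < n, NormalIn (c i) (c (i + 1))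

/-- `L` is quasisimple: `L = [L,L]` and `L/Z(L)` is a nonabelian simple group. -/
def IsQuasisimple {G : Type*} [Group G] (L : Subgroup G) : Prop :=
  ⁅L, L⁆ = L ∧ IsSimpleGroup (↥L ⧸ Subgroup.center ↥L) ∧
    ∃ a b : ↥L ⧸ Subgroup.center ↥L, a * b ≠ b * a

/-- A component of a group: a subnormal quasisimple subgroup. -/
def IsComponent {G : Type*} [Group G] (L : Subgroup G) : Prop :=
  IsSubnormal L ∧ IsQuasisimple L

/-- The Fitting subgroup: the subgroup generated by all nilpotent normal subgroups. -/
def fittingSubgroup (G : Type*) [Group G] : Subgroup G :=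
  sSup {N : Subgroup G | N.Normal ∧ Group.IsNilpotent ↥N}

/-- `E(G)`: the subgroup generated by all components of `G`. -/
def layer (G : Type*) [Group G] : Subgroup G :=
  sSup {L : Subgroup G | IsComponent L}

/-- The generalized Fitting subgroup `F*(G) = F(G) ⬝ E(G)`. -/
def genFitting (G : Type*) [Group G] : Subgroup G :=
  fittingSubgroup G ⊔ layer G

/-- `O_p(G) = 1`: every normal `p`-subgroup of `G` is trivial. -/
def OpTrivial (p : ℕ) (G : Type*) [Group G] : Prop :=
  ∀ N : Subgroup G, N.Normal → IsPGroup p ↥N → N = ⊥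

/-- `E` is an elementary abelian `p`-subgroup (possibly trivial). -/
def IsElemAb (p : ℕ) {G : Type*} [Group G] (E : Subgroup G) : Prop :=
  (∀ x ∈ E, ∀ y ∈ E, x * y = y * x) ∧ ∀ x ∈ E, x ^ p = 1

/-- The Quillen poset `A_p(H)` of nontrivial elementary abelian `p`-subgroups of `G`
contained in the subgroup `H`, regarded as a set of subgroups of `G`. -/
def apIn (p : ℕ) {G : Type*} [Group G] (H : Subgroup G) : Set (Subgroup G) :=
  {E | E ≠ ⊥ ∧ IsElemAb p E ∧ E ≤ H}

/-- The `p`-outer poset of `L` in `G`: nontrivial elementary abelian `p`-subgroups `B`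
of `N_G(L)` with `B ∩ (L C_G(L)) = 1`. -/
def outPoset (p : ℕ) {G : Type*} [Group G] (L : Subgroup G) : Set (Subgroup G) :=
  {B | B ≠ ⊥ ∧ IsElemAb p B ∧ B ≤ Subgroup.normalizer (L : Set G) ∧
    B ⊓ (L ⊔ Subgroup.centralizer (L : Set G)) = ⊥}

/-- The `p`-rank of a group: the largest `n` such that `K` contains an elementary abelian
`p`-subgroup of order `p ^ n`. -/
def pRank (p : ℕ) (K : Type*) [Group K] : ℕ :=
  sSup {n : ℕ | ∃ E : Subgroup K, IsElemAb p E ∧ Nat.card ↥E = p ^ n}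

/-- The `p`-local `q`-rank of a group `K`: the maximum of the `q`-ranks of normalizers of
nontrivial `p`-subgroups. -/
def pLocalRank (p q : ℕ) (K : Type*) [Group K] : ℕ :=
  sSup {n : ℕ | ∃ P : Subgroup K, P ≠ ⊥ ∧ IsPGroup p ↥P ∧
    ∃ E : Subgroup K, E ≤ Subgroup.normalizer (P : Set K) ∧ IsElemAb q E ∧ Nat.card ↥E = q ^ n}

/-- A group is `q`-elementary if it is the (internal) direct product of a cyclic group and
a `q`-group. -/
def qElementary (q : ℕ) (G : Type*) [Group G] : Prop :=
  ∃ C R : Subgroup G, IsCyclic ↥C ∧ IsPGroup q ↥R ∧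
    (∀ c ∈ C, ∀ r ∈ R, c * r = r * c) ∧ C ⊓ R = ⊥ ∧ C ⊔ R = ⊤

/-! ## The augmented rational chain complex of a finite poset

We represent a rational simplicial chain of (degree `k - 1`) of a poset `α` as a function
`Finset α → ℚ` supported on the `k`-element chains of `α`. -/

/-- The coefficient of the face `t` in the boundary of the simplex `s`: if `t ⊆ s` with
exactly one element `x` of `s` deleted, this is `(-1) ^ (number of elements of s below x)`. -/
def bdryCoeff {α : Type*} [PartialOrder α] (s t : Finset α) : ℚ :=
  if t ⊆ s ∧ t.card + 1 = s.card then
    ∑ x ∈ s \ t, (-1 : ℚ) ^ (s.filter fun y => y < x).card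
  else 0

/-- The simplicial boundary operator (on functions `Finset α → ℚ`). -/
def bdryFun {α : Type*} [PartialOrder α] (f : Finset α → ℚ) : Finset α → ℚ :=
  fun t => ∑ᶠ s : Finset α, bdryCoeff s t * f s

/-- `f` is a chain of size `k` (i.e. simplicial degree `k - 1`) of the subposet `S` of `α`:
it is supported on totally ordered `k`-element subsets of `S`. -/
def SuppOn {α : Type*} [PartialOrder α] (S : Set α) (k : ℕ) (f : Finset α → ℚ) : Prop :=
  ∀ s, f s ≠ 0 → s.card = k ∧ IsChain (· ≤ ·) (↑s : Set α) ∧ ↑s ⊆ S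

/-- `f` is a cycle of size `k` (degree `k - 1`) of the augmented rational chain complex of
the subposet `S`. -/
def IsCycleOn {α : Type*} [PartialOrder α] (S : Set α) (k : ℕ) (f : Finset α → ℚ) : Prop :=
  SuppOn S k f ∧ bdryFun f = 0

/-- `f` is a boundary of size `k` (degree `k - 1`) in the augmented rational chain complex of
the subposet `S`. -/
def IsBoundaryOn {α : Type*} [PartialOrder α] (S : Set α) (k : ℕ) (f : Finset α → ℚ) : Prop :=
  ∃ g : Finset α → ℚ, SuppOn S (k + 1) g ∧ bdryFun g = f

/-- The reduced rational homology of the subposet `S` is nonzero in degree `k - 1`. -/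
def RHomNZ {α : Type*} [PartialOrder α] (S : Set α) (k : ℕ) : Prop :=
  ∃ f : Finset α → ℚ, IsCycleOn S k f ∧ ¬ IsBoundaryOn S k f

/-- The reduced Euler characteristic of the subposet `S`:
`χ̃(S) = ∑_{n ≥ -1} (-1)^n f_n(S)` where `f_n` is the number of `(n+1)`-element chains. -/
def redEuler {α : Type*} [PartialOrder α] (S : Set α) : ℤ :=
  ∑ᶠ s : Finset α,
    if IsChain (· ≤ ·) (↑s : Set α) ∧ ↑s ⊆ S then (-1 : ℤ) ^ (s.card + 1) else 0

/-! ## Chains in a subcomplex of the order complex -/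

/-- `f` is a chain of size `k` supported on the subcomplex `M` (together with the empty chain,
for the augmentation). -/
def SuppM {α : Type*} [PartialOrder α] (M : Set (Finset α)) (k : ℕ) (f : Finset α → ℚ) : Prop :=
  ∀ s, f s ≠ 0 → s.card = k ∧ (s = ∅ ∨ s ∈ M)

/-- `f` is a cycle of size `k` of the (augmented) chain complex of the subcomplex `M`. -/
def IsCycleM {α : Type*} [PartialOrder α] (M : Set (Finset α)) (k : ℕ) (f : Finset α → ℚ) :
    Prop :=
  SuppM M k f ∧ bdryFun f = 0

/-- `f` is a boundary of size `k` in the (augmented) chain complex of the subcomplex `M`. -/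
def IsBoundaryM {α : Type*} [PartialOrder α] (M : Set (Finset α)) (k : ℕ) (f : Finset α → ℚ) :
    Prop :=
  ∃ g : Finset α → ℚ, SuppM M (k + 1) g ∧ bdryFun g = f

/-! ## Quillen-conjecture properties -/

/-- `G` satisfies (H-QC) at `p`: if `O_p(G) = 1` then `A_p(G)` has nonzero reduced rational
homology in some degree. -/
def HQC (p : ℕ) (G : Type*) [Group G] : Prop :=
  OpTrivial p G → ∃ k : ℕ, RHomNZ (apIn p (⊤ : Subgroup G)) k

/-- `K` has Quillen dimension at `p`: if `O_p(K) = 1` then `A_p(K)` has nonzero reduced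
rational homology in degree `m_p(K) - 1`. -/
def QDp (p : ℕ) (K : Type*) [Group K] : Prop :=
  OpTrivial p K → RHomNZ (apIn p (⊤ : Subgroup K)) (pRank p K)

/-- The fixed-point subposet `A_p(H)^Q` under conjugation by the subgroup `Q`. -/
def apFixed (p : ℕ) {G : Type*} [Group G] (H Q : Subgroup G) : Set (Subgroup G) :=
  {E | E ∈ apIn p H ∧ ∀ x ∈ Q, ∀ g : G, g ∈ E ↔ x * g * x⁻¹ ∈ E}

/-- The fixed-point subposet `A_p(H)^g` under conjugation by the element `g`. -/
def apFixedElt (p : ℕ) {G : Type*} [Group G] (H : Subgroup G) (g : G) : Set (Subgroup G) :=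
  {E | E ∈ apIn p H ∧ ∀ h : G, h ∈ E ↔ g * h * g⁻¹ ∈ E}

/-- Property `R(2)` for a (nonabelian simple) group `L`. -/
def PropertyR2 (L : Type*) [Group L] : Prop :=
  ∃ Q : Subgroup L, qElementary 3 ↥Q ∧ Odd (Nat.card ↥Q) ∧ ¬ OpTrivial 3 ↥Q ∧
    ¬ ((3 : ℤ) ∣ redEuler (apFixed 2 (⊤ : Subgroup L) Q)) ∧
    ∀ E : Subgroup (MulAut L), E ≠ ⊥ → IsElemAb 2 E →
      E ≤ Subgroup.centralizer
        ((Subgroup.map (MulAut.conj : L →* MulAut L) Q : Subgroup (MulAut L)) : Set (MulAut L)) →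
      E ≤ (MulAut.conj : L →* MulAut L).range

/-! ## The pre-join of posets and the initial shuffle product -/

/-- The pre-join of `X` and `Y`: the poset `(C⁻X × C⁻Y) \ {(⊥, ⊥)}`. -/
abbrev PreJoin (X Y : Type*) := {p : WithBot X × WithBot Y // p ≠ (⊥, ⊥)}

/-- The embedding of `X` into the pre-join, `x ↦ (x, ⊥)`. -/
def inX {X Y : Type*} (x : X) : PreJoin X Y :=
  ⟨((x : WithBot X), ⊥), fun h => WithBot.coe_ne_bot (congrArg Prod.fst h)⟩

/-- The embedding of `Y` into the pre-join, `y ↦ (⊥, y)`. -/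
def inY {X Y : Type*} (y : Y) : PreJoin X Y :=
  ⟨(⊥, (y : WithBot Y)), fun h => WithBot.coe_ne_bot (congrArg Prod.snd h)⟩

/-- The element `(x, y)` of the pre-join. -/
def inXY {X Y : Type*} (x : X) (y : Y) : PreJoin X Y :=
  ⟨((x : WithBot X), (y : WithBot Y)), fun h => WithBot.coe_ne_bot (congrArg Prod.fst h)⟩

/-- `c` is a shuffle chain for the pair `(a, b)`: a maximal chain of the grid poset determined
by the `X`-part of `a` and by `b` (with the bottom `(⊥, ⊥)` removed), i.e. a chain of the
pre-join of cardinality `|a_X| + |b|` whose coordinates come from `a` and `b`. -/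
def gridOK {X Y W : Type*} [PartialOrder X] [PartialOrder Y] [PartialOrder W]
    (ιP : PreJoin X Y ↪o W) (a b : Finset W) (c : Finset (PreJoin X Y)) : Prop :=
  IsChain (· ≤ ·) (↑c : Set (PreJoin X Y)) ∧
  c.card = (a.filter fun w => ∃ x : X, w = ιP (inX x)).card + b.card ∧
  ∀ q ∈ c, (q.1.1 = ⊥ ∨ ∃ x : X, q.1.1 = (x : WithBot X) ∧ ιP (inX x) ∈ a) ∧
    (q.1.2 = ⊥ ∨ ∃ y : Y, q.1.2 = (y : WithBot Y) ∧ ιP (inY y) ∈ b)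

/-- The number of inversions of the shuffle chain `c` (the number of cells of the
`a_X × b` rectangle lying below the corresponding lattice path). -/
def invCount {X Y W : Type*} [PartialOrder X] [PartialOrder Y] [PartialOrder W]
    (ιP : PreJoin X Y ↪o W) (a b : Finset W) (c : Finset (PreJoin X Y)) : ℕ :=
  Set.ncard {xy : X × Y | ιP (inX xy.1) ∈ a ∧ ιP (inY xy.2) ∈ b ∧
    ∀ q ∈ c, q.1.1 = (xy.1 : WithBot X) → (xy.2 : WithBot Y) ≤ q.1.2}

/-- The coefficient of the chain `e` of `W` in the initial shuffle product `T(a, b)`. -/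
def Tcoeff {X Y Z W : Type*} [PartialOrder X] [PartialOrder Y] [PartialOrder Z] [PartialOrder W]
    (ιP : PreJoin X Y ↪o W) (ιZ : Z ↪o W) (a b e : Finset W) : ℚ :=
  ∑ᶠ c : Finset (PreJoin X Y),
    if gridOK ιP a b c ∧
        e = c.image (fun q => ιP q) ∪ a.filter (fun w => ∃ z : Z, w = ιZ z) then
      (-1 : ℚ) ^ invCount ιP a b c
    else 0

/-- The initial shuffle product `T_*(f ⊗ g)`, as a function on `Finset W`. -/
def Tmap {X Y Z W : Type*} [PartialOrder X] [PartialOrder Y] [PartialOrder Z] [PartialOrder W]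
    (ιP : PreJoin X Y ↪o W) (ιZ : Z ↪o W) (f g : Finset W → ℚ) : Finset W → ℚ :=
  fun e => ∑ᶠ a : Finset W, ∑ᶠ b : Finset W, f a * g b * Tcoeff ιP ιZ a b e


/-- The order relation `⊑` on `A_p(H) ∪ F`, for `H = L C_G(L)`, with excluded cross-relations
at the conical `p`-outers `F_1`. -/
def sqRel (p : ℕ) {G : Type*} [Group G] (L : Subgroup G) (x y : Subgroup G) : Prop :=
  (x ∈ apIn p (L ⊔ Subgroup.centralizer (L : Set G)) ∧
    y ∈ apIn p (L ⊔ Subgroup.centralizer (L : Set G)) ∧ x < y) ∨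
  ((x ∈ apIn p (⊤ : Subgroup G) ∧ x ⊓ (L ⊔ Subgroup.centralizer (L : Set G)) = ⊥) ∧
    (y ∈ apIn p (⊤ : Subgroup G) ∧ y ⊓ (L ⊔ Subgroup.centralizer (L : Set G)) = ⊥) ∧
    x < y) ∨
  ((x ∈ apIn p (⊤ : Subgroup G) ∧ x ⊓ (L ⊔ Subgroup.centralizer (L : Set G)) = ⊥) ∧
    y ∈ apIn p (L ⊔ Subgroup.centralizer (L : Set G)) ∧
    y ⊓ Subgroup.centralizer (x : Set G) ≠ ⊥ ∧
    ((x ∈ outPoset p L ∧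
        ¬ OpTrivial p ↥(Subgroup.centralizer ((L ⊔ x : Subgroup G) : Set G))) →
      ¬ y ⊓ Subgroup.centralizer (x : Set G) ≤ L))

/-! The relation `⊑` is built from inclusions, and `A_p(H)` and `F` are disjoint, so everything
reduces to the case `F < F' ⊑ A` with `F ∈ F_1`, where `C_A(F) ≤ L` has to be ruled out.
If `C_A(F) ≤ L`, then `C_A(F')` is a nontrivial subgroup of `L` of exponent `p`; since `|Z(L)|`
is prime to `p` it contains a noncentral element `w` of `L`. For `u ∈ F'`, `L^u ∩ L` is subnormal
in the quasisimple group `L` and contains `w`, so it is `L`: hence `F'` normalizes `L` and is a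
`p`-outer. Next, `F'` normalizes `C_G(LF)`, hence also `O_p(C_G(LF))`, which is nontrivial as
`F ∈ F_1`; the fixed points of the `p`-group `F'` on it form a nontrivial normal `p`-subgroup of
`C_G(LF')`. So `F' ∈ F_1`, and `C_A(F') ≤ C_A(F) ≤ L` contradicts `F' ⊑ A`. -/

open Subgroup

section

variable {G : Type*} [Group G] {p : ℕ}

lemma centralizer_sup (H K : Subgroup G) :
    centralizer ((H ⊔ K : Subgroup G) : Set G) =
      centralizer (H : Set G) ⊓ centralizer (K : Set G) := by
  rw [sup_eq_closure, centralizer_closure]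
  ext g
  simp only [mem_inf, mem_centralizer_iff, Set.mem_union, or_imp, forall_and, SetLike.mem_coe]

lemma normalizer_le_normalizer_centralizer (H : Subgroup G) :
    normalizer (H : Set G) ≤ normalizer (centralizer (H : Set G) : Set G) := by
  intro g hg
  rw [mem_normalizer_iff]
  intro c
  simp only [mem_centralizer_iff]
  constructor
  · intro hc k hk
    have hkc := hc _ ((mem_normalizer_iff''.mp hg k).mp hk)
    calc k * (g * c * g⁻¹) = g * ((g⁻¹ * k * g) * c) * g⁻¹ := by group
      _ = g * c * g⁻¹ * k := by rw [hkc]; group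
  · intro hc k hk
    have hkc := hc _ ((hg k).mp hk)
    calc k * c = g⁻¹ * ((g * k * g⁻¹) * (g * c * g⁻¹)) * g := by group
      _ = c * k := by rw [hkc]; group

lemma le_normalizer_sup {K Q R : Subgroup G} (hQ : K ≤ normalizer (Q : Set G))
    (hR : K ≤ normalizer (R : Set G)) : K ≤ normalizer ((Q ⊔ R : Subgroup G) : Set G) := by
  intro g hg
  rw [mem_normalizer_iff_map_conj_eq, Subgroup.map_sup,
    mem_normalizer_iff_map_conj_eq.mp (hQ hg), mem_normalizer_iff_map_conj_eq.mp (hR hg)]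

lemma le_normalizer_inf {K Q R : Subgroup G} (hQ : K ≤ normalizer (Q : Set G))
    (hR : K ≤ normalizer (R : Set G)) : K ≤ normalizer ((Q ⊓ R : Subgroup G) : Set G) := by
  intro g hg
  rw [mem_normalizer_iff_map_conj_eq, map_inf_eq _ _ _ (MulAut.conj g).injective,
    mem_normalizer_iff_map_conj_eq.mp (hQ hg), mem_normalizer_iff_map_conj_eq.mp (hR hg)]

lemma notMem_of_pow_eq_one_of_coprime_card (hp : p.Prime) [Finite G] {K : Subgroup G}
    (hK : (Nat.card K).Coprime p) {w : G} (hwp : w ^ p = 1) (hw : w ≠ 1) : w ∉ K := by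
  intro hwK
  have : Fact p.Prime := ⟨hp⟩
  have hdvd : p ∣ Nat.card K := orderOf_eq_prime hwp hw ▸ K.orderOf_dvd_natCard hwK
  exact hp.one_lt.ne' (Nat.Coprime.eq_one_of_dvd hK.symm hdvd)

lemma IsElemAb.isPGroup {E : Subgroup G} (hE : IsElemAb p E) : IsPGroup p E :=
  fun g => ⟨1, Subtype.ext (by simpa using hE.2 g g.2)⟩

lemma _root_.IsPGroup.inf_centralizer_ne_bot [Fact p.Prime] [Finite G] {P Q : Subgroup G}
    (hP : IsPGroup p P) (hQ : IsPGroup p Q) (hQP : Q ≤ normalizer (P : Set G)) (hP1 : P ≠ ⊥) :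
    P ⊓ centralizer (Q : Set G) ≠ ⊥ := by
  -- `Q` acts on `P` by conjugation
  let _ := MulDistribMulAction.compHom P (P.normalizerMonoidHom.comp (inclusion hQP))
  have hdvd : p ∣ Nat.card P := (hP.card_eq_or_dvd).resolve_left
    (fun h => hP1 (card_eq_one.mp h))
  obtain ⟨b, hb, hb1⟩ := hQ.exists_fixed_point_of_prime_dvd_card_of_fixed_point P hdvd
    (a := 1) (fun q => smul_one q)
  refine ne_bot_iff_exists_ne_one.mpr ⟨⟨b, b.2, mem_centralizer_iff.mpr fun q hq => ?_⟩, ?_⟩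
  · have hqb : q * b * q⁻¹ = b := congrArg Subtype.val (hb ⟨q, hq⟩)
    exact mul_inv_eq_iff_eq_mul.mp hqb
  · exact fun h => hb1 (Subtype.ext (congrArg Subtype.val h).symm)

variable (p) in
def normalPSubgroups (K : Subgroup G) : Set (Subgroup G) :=
  {Q | Q ≤ K ∧ IsPGroup p Q ∧ K ≤ normalizer (Q : Set G)}

variable (p) in
/-- `O_p(K)`, as a subgroup of `G`. -/
def pCore (K : Subgroup G) : Subgroup G :=
  sSup (normalPSubgroups p K)

lemma supClosed_normalPSubgroups (K : Subgroup G) : SupClosed (normalPSubgroups p K) :=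
  fun _ ⟨hQK, hQ, hKQ⟩ _ ⟨hRK, hR, hKR⟩ =>
    ⟨sup_le hQK hRK, hQ.to_sup_of_normal_right' hR (hQK.trans hKR), le_normalizer_sup hKQ hKR⟩

lemma pCore_mem_normalPSubgroups [Finite G] (K : Subgroup G) :
    pCore p K ∈ normalPSubgroups p K :=
  (supClosed_normalPSubgroups K).sSup_mem (Set.toFinite _)
    ⟨bot_le, IsPGroup.of_bot, le_normalizer_of_normal⟩ subset_rfl

lemma map_conj_mem_normalPSubgroups {K Q : Subgroup G} {g : G}
    (hg : g ∈ normalizer (K : Set G)) (hQ : Q ∈ normalPSubgroups p K) :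
    Q.map (MulAut.conj g) ∈ normalPSubgroups p K := by
  obtain ⟨hQK, hQp, hKQ⟩ := hQ
  refine ⟨?_, hQp.map _, ?_⟩
  · exact (map_mono hQK).trans (mem_normalizer_iff_map_conj_eq.mp hg).le
  · calc K = K.map (MulAut.conj g) := (mem_normalizer_iff_map_conj_eq.mp hg).symm
      _ ≤ (normalizer (Q : Set G)).map (MulAut.conj g) := map_mono hKQ
      _ ≤ _ := le_normalizer_map _

lemma normalizer_le_normalizer_pCore [Finite G] (K : Subgroup G) :
    normalizer (K : Set G) ≤ normalizer (pCore p K : Set G) := fun _ hg =>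
  mem_normalizer_fintype fun _ hn =>
    le_sSup (map_conj_mem_normalPSubgroups hg (pCore_mem_normalPSubgroups K)) ⟨_, hn, rfl⟩

lemma opTrivial_iff_pCore_eq_bot [Finite G] (K : Subgroup G) :
    OpTrivial p K ↔ pCore p K = ⊥ := by
  obtain ⟨hOK, hOp, hKO⟩ := pCore_mem_normalPSubgroups (p := p) K
  constructor
  · intro h
    have := h _ ((normal_subgroupOf_iff_le_normalizer hOK).mpr hKO) (hOp.comap_subtype)
    rwa [subgroupOf_eq_bot, disjoint_iff, inf_eq_left.mpr hOK] at this
  · intro h N hN hNp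
    have hmem : N.map K.subtype ∈ normalPSubgroups p K :=
      ⟨map_subtype_le N, hNp.map _, (normal_subgroupOf_iff_le_normalizer (map_subtype_le N)).mp
        (by rwa [← comap_subtype, comap_map_eq_self_of_injective K.subtype_injective])⟩
    have := le_sSup hmem
    rwa [← pCore, h, le_bot_iff, map_eq_bot_iff_of_injective _ K.subtype_injective] at this

lemma not_opTrivial_centralizer_sup_of_le [Fact p.Prime] [Finite G] {L x y : Subgroup G}
    (hxy : x ≤ y) (hyL : y ≤ normalizer (L : Set G)) (hy : IsElemAb p y)
    (hx : ¬ OpTrivial p ↥(centralizer ((L ⊔ x : Subgroup G) : Set G))) :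
    ¬ OpTrivial p ↥(centralizer ((L ⊔ y : Subgroup G) : Set G)) := by
  set K := centralizer ((L ⊔ x : Subgroup G) : Set G)
  rw [opTrivial_iff_pCore_eq_bot] at hx ⊢
  obtain ⟨hOK, hOp, hKO⟩ := pCore_mem_normalPSubgroups (p := p) K
  have hyx : y ≤ centralizer (x : Set G) := fun u hu =>
    mem_centralizer_iff.mpr fun v hv => hy.1 v (hxy hv) u hu
  have hyK : y ≤ normalizer (K : Set G) :=
    (le_normalizer_sup hyL (hyx.trans (centralizer_le_normalizer _))).trans
      (normalizer_le_normalizer_centralizer _)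
  have hyO : y ≤ normalizer (pCore p K : Set G) := hyK.trans (normalizer_le_normalizer_pCore K)
  have hD : pCore p K ⊓ centralizer (y : Set G) ∈
      normalPSubgroups p (centralizer ((L ⊔ y : Subgroup G) : Set G)) := by
    refine ⟨?_, hOp.to_le inf_le_left, le_normalizer_inf ?_ ?_⟩
    · rw [centralizer_sup]
      exact inf_le_inf_right _
        (hOK.trans (centralizer_le (SetLike.coe_subset_coe.mpr le_sup_left)))
    · exact (centralizer_le (SetLike.coe_subset_coe.mpr (sup_le_sup_left hxy L))).trans hKO
    · rw [centralizer_sup]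
      exact inf_le_right.trans le_normalizer
  exact ne_bot_of_le_ne_bot (hOp.inf_centralizer_ne_bot hy.isPGroup hyO hx) (le_sSup hD)

end

section

variable {G : Type*} [Group G] {p : ℕ} {L : Subgroup G}

lemma IsSubnormal.isSubnormal (hL : IsSubnormal L) : L.IsSubnormal := by
  obtain ⟨n, c, rfl, hn, hc⟩ := hL
  induction n generalizing c with
  | zero => exact hn ▸ .top
  | succ n ih =>
    have h0 := hc 0 n.succ_pos
    refine .step _ _ h0.1 (ih (fun i => c (i + 1)) hn fun i hi => hc (i + 1) (by omega)) ?_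
    exact (normal_subgroupOf_iff h0.1).mpr fun a k ha hk => h0.2 k hk a ha

lemma IsQuasisimple.commutator_eq_top (hL : IsQuasisimple L) : commutator L = ⊤ := by
  apply map_injective L.subtype_injective
  rw [commutator_def, map_commutator, ← MonoidHom.range_eq_map, range_subtype, hL.1]

lemma le_center_or_eq_top_of_isSubnormal {M : Type*} [Group M] (hM : commutator M = ⊤)
    (hs : IsSimpleGroup (M ⧸ center M)) {A : Subgroup M} (hA : A.IsSubnormal) :
    A ≤ center M ∨ A = ⊤ := by
  rcases (hA.map (QuotientGroup.mk'_surjective _)).eq_bot_or_top_of_isSimpleGroup hs with h | h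
  · left
    rwa [Subgroup.map_eq_bot_iff, QuotientGroup.ker_mk'] at h
  · right
    have hsup : A ⊔ center M = ⊤ := by
      rw [← QuotientGroup.ker_mk' (center M), ← comap_map_eq, h, comap_top]
    have : A.Normal := normalizer_eq_top_iff.mp (top_le_iff.mp (hsup ▸ sup_le le_normalizer
      ((center_le_centralizer _).trans (centralizer_le_normalizer _))))
    exact top_le_iff.mp (hM ▸ this.commutator_le_of_self_sup_commutative_eq_top hsup inferInstance)

lemma mem_center_iff_mem_centralizer {a : L} :
    a ∈ center L ↔ (a : G) ∈ centralizer (L : Set G) := by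
  rw [mem_center_iff, mem_centralizer_iff]
  exact ⟨fun h g hg => congrArg Subtype.val (h ⟨g, hg⟩), fun h g => Subtype.ext (h g g.2)⟩

lemma IsComponent.mem_normalizer_of_commute [Finite G] (hL : IsComponent L)
    {w u : G} (hwL : w ∈ L) (hwZ : w ∉ centralizer (L : Set G)) (hu : Commute u w) :
    u ∈ normalizer (L : Set G) := by
  have hsub : ((L.map (MulAut.conj u) ⊓ L).subgroupOf L).IsSubnormal :=
    ((hL.1.isSubnormal.map (MulAut.conj u).surjective).inf hL.1.isSubnormal).subgroupOf
  rcases le_center_or_eq_top_of_isSubnormal hL.2.commutator_eq_top hL.2.2.1 hsub with hZ | htop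
  · have hw : (⟨w, hwL⟩ : L) ∈ (L.map (MulAut.conj u) ⊓ L).subgroupOf L :=
      mem_subgroupOf.mpr ⟨⟨w, hwL, by simp [hu.eq]⟩, hwL⟩
    exact absurd (mem_center_iff_mem_centralizer.mp (hZ hw)) hwZ
  · rw [← inv_mem_iff]
    refine mem_normalizer_fintype fun n hn => ?_
    obtain ⟨m, hm, rfl⟩ := (subgroupOf_eq_top.mp htop hn).1
    simpa [mul_assoc] using hm

lemma inf_ne_bot_of_mem_apIn {H B : Subgroup G} (hB : B ∈ apIn p H) : B ⊓ H ≠ ⊥ := by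
  rw [inf_eq_left.mpr hB.2.2]
  exact hB.1

lemma le_normalizer_of_inf_centralizer_le [Fact p.Prime] [Finite G] (hL : IsComponent L)
    (hZ : Nat.Coprime (Nat.card ↥(L ⊓ centralizer (L : Set G))) p) {x y : Subgroup G}
    (hy : IsElemAb p y) (hne : y ⊓ centralizer (x : Set G) ≠ ⊥)
    (hle : y ⊓ centralizer (x : Set G) ≤ L) : x ≤ normalizer (L : Set G) := by
  obtain ⟨w, hw1⟩ := ne_bot_iff_exists_ne_one.mp hne
  have hwL : (w : G) ∈ L := hle w.2
  have hwZ : (w : G) ∉ centralizer (L : Set G) := fun hwC =>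
    notMem_of_pow_eq_one_of_coprime_card Fact.out hZ (hy.2 w w.2.1) (by simpa using hw1)
      ⟨hwL, hwC⟩
  exact fun u hu => hL.mem_normalizer_of_commute hwL hwZ (mem_centralizer_iff.mp w.2.2 u hu)

lemma sqRel_irrefl (A : Subgroup G) : ¬ sqRel p L A A := by
  rintro (⟨-, -, hlt⟩ | ⟨-, -, hlt⟩ | ⟨⟨-, hAF⟩, hAH, -⟩)
  exacts [hlt.false, hlt.false, inf_ne_bot_of_mem_apIn hAH hAF]

lemma sqRel_of_outer_lt_of_cross [Fact p.Prime] [Finite G] (hL : IsComponent L)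
    (hZ : Nat.Coprime (Nat.card ↥(L ⊓ centralizer (L : Set G))) p) {A A' A'' : Subgroup G}
    (hA : A ∈ apIn p ⊤ ∧ A ⊓ (L ⊔ centralizer (L : Set G)) = ⊥)
    (hA' : A' ∈ apIn p ⊤ ∧ A' ⊓ (L ⊔ centralizer (L : Set G)) = ⊥) (hlt : A < A')
    (hA'' : A'' ∈ apIn p (L ⊔ centralizer (L : Set G)))
    (hne : A'' ⊓ centralizer (A' : Set G) ≠ ⊥)
    (hcon : A' ∈ outPoset p L ∧
        ¬ OpTrivial p ↥(centralizer ((L ⊔ A' : Subgroup G) : Set G)) →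
      ¬ A'' ⊓ centralizer (A' : Set G) ≤ L) :
    sqRel p L A A'' := by
  have hmono : A'' ⊓ centralizer (A' : Set G) ≤ A'' ⊓ centralizer (A : Set G) :=
    inf_le_inf_left _ (centralizer_le (SetLike.coe_subset_coe.mpr hlt.le))
  refine Or.inr (Or.inr ⟨hA, hA'', ne_bot_of_le_ne_bot hne hmono, ?_⟩)
  rintro ⟨-, hop⟩ hle
  have hN := le_normalizer_of_inf_centralizer_le hL hZ hA''.2.1 hne (hmono.trans hle)
  exact hcon ⟨⟨hA'.1.1, hA'.1.2.1, hN, hA'.2⟩,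
    not_opTrivial_centralizer_sup_of_le hlt.le hN hA'.1.2.1 hop⟩ (hmono.trans hle)

lemma sqRel_trans [Fact p.Prime] [Finite G] (hL : IsComponent L)
    (hZ : Nat.Coprime (Nat.card ↥(L ⊓ centralizer (L : Set G))) p) {A A' A'' : Subgroup G}
    (h : sqRel p L A A') (h' : sqRel p L A' A'') : sqRel p L A A'' := by
  rcases h with ⟨hA, hA', hlt⟩ | ⟨hA, hA', hlt⟩ | ⟨hA, hA', hne, hcon⟩ <;>
    rcases h' with ⟨hA'₁, hA'', hlt'⟩ | ⟨hA'₁, hA'', hlt'⟩ | ⟨hA'₁, hA'', hne', hcon'⟩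
  · exact Or.inl ⟨hA, hA'', hlt.trans hlt'⟩
  · exact absurd hA'₁.2 (inf_ne_bot_of_mem_apIn hA')
  · exact absurd hA'₁.2 (inf_ne_bot_of_mem_apIn hA')
  · exact absurd hA'.2 (inf_ne_bot_of_mem_apIn hA'₁)
  · exact Or.inr (Or.inl ⟨hA, hA'', hlt.trans hlt'⟩)
  · exact sqRel_of_outer_lt_of_cross hL hZ hA hA' hlt hA'' hne' hcon'
  · have hmono := inf_le_inf_right (centralizer (A : Set G)) hlt'.le
    exact Or.inr (Or.inr ⟨hA, hA'', ne_bot_of_le_ne_bot hne hmono,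
      fun hc hle => hcon hc (hmono.trans hle)⟩)
  · exact absurd hA'₁.2 (inf_ne_bot_of_mem_apIn hA')
  · exact absurd hA'₁.2 (inf_ne_bot_of_mem_apIn hA')

end

/-- for a component `L` with `|Z(L)|` coprime to `p`, the relation `⊑` is a
strict partial order. -/
theorem statement8 {p : ℕ} (hp : p.Prime) {G : Type*} [Group G] [Finite G]
    (L : Subgroup G) (hL : IsComponent L)
    (hZ : Nat.Coprime (Nat.card ↥(L ⊓ Subgroup.centralizer (L : Set G))) p) :
    (∀ A, ¬ sqRel p L A A) ∧
    (∀ A A' A'', sqRel p L A A' → sqRel p L A' A'' → sqRel p L A A'') := by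
  have : Fact p.Prime := ⟨hp⟩
  exact ⟨sqRel_irrefl, fun _ _ _ => sqRel_trans hL hZ⟩

end QF
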